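/- Fix τ with 0 < τ ≤ 1/(8d²) and a slack vector ν with ‖ν‖_∞ ≤ 1/(4d). If Γ ∈ 𝕃₂, then there exists a marginal vector Γ' ∈ 𝕃₂^ν such that Γ'_i(x_i) ≥ τ for all i∈V and x_i∈χ, Γ'_{ij}(x_i,x_j) ≥ τ for all ij∈E and x_i,x_j∈χ, and ‖Γ − Γ'‖₁ ≤ 6·d·deg(G)·‖ν‖₁ + 8(|E|+n)d²τ. -/

import Mathlib

noncomputable section

/-- A marginal vector: a vector `Γ_i ∈ ℝ^d` for every vertex and a matrix
`Γ_{ij} ∈ ℝ^{d×d}` for every edge (components outside `E` are ignored). -/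
abbrev MV (V : Type) (d : ℕ) : Type :=
  (V → Fin d → ℝ) × ((V × V) → Fin d → Fin d → ℝ)

/-- `‖Γ‖₁`: the sum of absolute values of all entries of `Γ`. -/
def mvL1 {V : Type} [Fintype V] {d : ℕ} (E : Finset (V × V)) (Γ : MV V d) : ℝ :=
  (∑ i : V, ∑ x : Fin d, |Γ.1 i x|) + ∑ e ∈ E, ∑ x : Fin d, ∑ y : Fin d, |Γ.2 e x y|

/-- A slack vector: for each edge `ij`, vectors `ν_{ij}` (first component)
and `ν_{ji}` (second component) in `ℝ^d`. -/
abbrev Slk (V : Type) (d : ℕ) : Type :=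
  ((V × V) → Fin d → ℝ) × ((V × V) → Fin d → ℝ)

/-- Slack vectors have zero coordinate sums on every edge. -/
def isSlack {V : Type} {d : ℕ} (E : Finset (V × V)) (ν : Slk V d) : Prop :=
  ∀ e ∈ E, (∑ x, ν.1 e x = 0) ∧ (∑ x, ν.2 e x = 0)

/-- `‖ν‖₁`: the sum of absolute values of all entries of the slack vector. -/
def slkL1 {V : Type} {d : ℕ} (E : Finset (V × V)) (ν : Slk V d) : ℝ :=
  ∑ e ∈ E, ((∑ x, |ν.1 e x|) + ∑ x, |ν.2 e x|)

/-- Membership in the slack polytope `𝕃₂^ν`; the local polytope `𝕃₂` is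
`𝕃₂^0`. -/
def memSL2 {V : Type} [Fintype V] {d : ℕ} (E : Finset (V × V)) (ν : Slk V d)
    (Γ : MV V d) : Prop :=
  (∀ i x, 0 ≤ Γ.1 i x) ∧ (∀ i, ∑ x, Γ.1 i x = 1) ∧
  (∀ e ∈ E, ∀ x y, 0 ≤ Γ.2 e x y) ∧
  (∀ e ∈ E, ∀ x, ∑ y, Γ.2 e x y = Γ.1 e.1 x + ν.1 e x) ∧
  (∀ e ∈ E, ∀ y, ∑ x, Γ.2 e x y = Γ.1 e.2 y + ν.2 e y) ∧
  (∀ e ∈ E, ∑ x, ∑ y, Γ.2 e x y = 1)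

/-- Maximum degree of the graph. -/
def degG {V : Type} [Fintype V] [DecidableEq V] (E : Finset (V × V)) : ℕ :=
  Finset.univ.sup fun i : V => (E.filter fun e => e.1 = i ∨ e.2 = i).card

/-!
First move every vertex marginal `Γ_i` towards the uniform distribution with a weight `δ_i`
of order `d` times the slack at `i` (plus `d²τ`), and replace `Γ_{ij}` by
`(1 - ε) Γ_{ij} + p qᵀ / ε` with `ε = δ_i + δ_j`; the vectors `p`, `q` absorb the slack and stay
nonnegative because `δ_i / d` dominates every `|ν_{ij}(x)|`. This lands in `𝕃₂^ν` at `ℓ¹` cost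
`2δ_i` per vertex and `2ε` per edge, and summing the slack over edge endpoints gives the factor
`d · deg(G)`. Then mix in, with weight `2d²τ`, a point of `𝕃₂^ν` that does not depend on `Γ`
and whose edge entries are all at least `1 / (2d²)`: the slack polytope is convex, every entry
is lifted to `τ`, and the extra cost is at most `2 · 2d²τ` per vertex and per edge.
-/

open Finset

lemma sum_abs_sub_le_sum_add_sum {ι : Type*} (s : Finset ι) {a b : ι → ℝ}
    (ha : ∀ i ∈ s, 0 ≤ a i) (hb : ∀ i ∈ s, 0 ≤ b i) :
    ∑ i ∈ s, |a i - b i| ≤ ∑ i ∈ s, a i + ∑ i ∈ s, b i := by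
  rw [← sum_add_distrib]
  exact sum_le_sum fun i hi => abs_sub_le_iff.2 ⟨by linarith [hb i hi], by linarith [ha i hi]⟩

lemma abs_le_half_sum_abs_of_sum_eq_zero {ι : Type*} [Fintype ι] [DecidableEq ι]
    {v : ι → ℝ} (hv : ∑ y, v y = 0) (x : ι) : |v x| ≤ (∑ y, |v y|) / 2 := by
  have hsum := add_sum_erase univ v (mem_univ x)
  have hsum_abs := add_sum_erase univ (fun y => |v y|) (mem_univ x)
  have : |v x| ≤ ∑ y ∈ univ.erase x, |v y| := by
    rw [show v x = -∑ y ∈ univ.erase x, v y by linarith, abs_neg]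
    exact abs_sum_le_sum_abs _ _
  linarith

section L1

variable {V : Type} [Fintype V] {d : ℕ} (E : Finset (V × V))

lemma mvL1_nonneg (A : MV V d) : 0 ≤ mvL1 E A := by
  unfold mvL1; positivity

lemma mvL1_add_le (A B : MV V d) : mvL1 E (A + B) ≤ mvL1 E A + mvL1 E B := by
  simp only [mvL1, Prod.fst_add, Prod.snd_add, Pi.add_apply]
  calc _ ≤ (∑ i, ∑ x, (|A.1 i x| + |B.1 i x|))
        + ∑ e ∈ E, ∑ x, ∑ y, (|A.2 e x y| + |B.2 e x y|) := by
        gcongr <;> apply abs_add_le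
    _ = _ := by simp only [sum_add_distrib]; ring

lemma mvL1_smul (c : ℝ) (A : MV V d) : mvL1 E (c • A) = |c| * mvL1 E A := by
  simp only [mvL1, Prod.smul_fst, Prod.smul_snd, Pi.smul_apply, smul_eq_mul, abs_mul,
    mul_add, mul_sum]

lemma mvL1_sub_convexComb_le (C A B : MV V d) {θ : ℝ} (h0 : 0 ≤ θ) (h1 : θ ≤ 1) :
    mvL1 E (C - ((1 - θ) • A + θ • B)) ≤ (1 - θ) * mvL1 E (C - A) + θ * mvL1 E (C - B) := by
  have hsplit : C - ((1 - θ) • A + θ • B) = (1 - θ) • (C - A) + θ • (C - B) := by module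
  rw [hsplit]
  refine (mvL1_add_le E _ _).trans_eq ?_
  rw [mvL1_smul, mvL1_smul, abs_of_nonneg (by linarith), abs_of_nonneg h0]

lemma mvL1_sub_le_of_memSL2 {ν μ : Slk V d} {A B : MV V d}
    (hA : memSL2 E ν A) (hB : memSL2 E μ B) :
    mvL1 E (A - B) ≤ 2 * (Fintype.card V + E.card) := by
  obtain ⟨hA0, hA1, hA2, -, -, hA3⟩ := hA
  obtain ⟨hB0, hB1, hB2, -, -, hB3⟩ := hB
  have hV : ∀ i, ∑ x, |(A - B).1 i x| ≤ 2 := fun i =>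
    calc ∑ x, |A.1 i x - B.1 i x| ≤ ∑ x, A.1 i x + ∑ x, B.1 i x :=
          sum_abs_sub_le_sum_add_sum _ (fun x _ => hA0 i x) (fun x _ => hB0 i x)
      _ = 2 := by rw [hA1, hB1]; norm_num
  have hE : ∀ e ∈ E, ∑ x, ∑ y, |(A - B).2 e x y| ≤ 2 := fun e he =>
    calc ∑ x, ∑ y, |A.2 e x y - B.2 e x y| ≤ ∑ x, (∑ y, A.2 e x y + ∑ y, B.2 e x y) :=
          sum_le_sum fun x _ =>
            sum_abs_sub_le_sum_add_sum _ (fun y _ => hA2 e he x y) (fun y _ => hB2 e he x y)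
      _ = 2 := by rw [sum_add_distrib, hA3 e he, hB3 e he]; norm_num
  calc mvL1 E (A - B) ≤ ∑ _i : V, (2 : ℝ) + ∑ _e ∈ E, (2 : ℝ) :=
        add_le_add (sum_le_sum fun i _ => hV i) (sum_le_sum hE)
    _ = _ := by simp only [sum_const, card_univ, nsmul_eq_mul]; ring

end L1

lemma memSL2_convexComb {V : Type} [Fintype V] {d : ℕ} {E : Finset (V × V)} {ν : Slk V d}
    {A B : MV V d} (hA : memSL2 E ν A) (hB : memSL2 E ν B) {θ : ℝ} (h0 : 0 ≤ θ) (h1 : θ ≤ 1) :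
    memSL2 E ν ((1 - θ) • A + θ • B) := by
  obtain ⟨hA0, hA1, hA2, hA3, hA4, hA5⟩ := hA
  obtain ⟨hB0, hB1, hB2, hB3, hB4, hB5⟩ := hB
  have h0' : 0 ≤ 1 - θ := by linarith
  simp only [memSL2, Prod.fst_add, Prod.snd_add, Prod.smul_fst, Prod.smul_snd, Pi.add_apply,
    Pi.smul_apply, smul_eq_mul, sum_add_distrib, ← mul_sum]
  refine ⟨fun i x => by have := hA0 i x; have := hB0 i x; positivity,
    fun i => by rw [hA1, hB1]; ring,
    fun e he x y => by have := hA2 e he x y; have := hB2 e he x y; positivity,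
    fun e he x => by rw [hA3 e he, hB3 e he]; ring,
    fun e he y => by rw [hA4 e he, hB4 e he]; ring,
    fun e he => by rw [hA5 e he, hB5 e he]; ring⟩

section Incidence

variable {V : Type} [DecidableEq V] (E : Finset (V × V))

def incidentEdges (i : V) : Finset (V × V) := E.filter fun e => e.1 = i ∨ e.2 = i

variable [Fintype V]

lemma card_incidentEdges_le_degG (i : V) : (incidentEdges E i).card ≤ degG E :=
  le_sup (f := fun i => (incidentEdges E i).card) (mem_univ i)

lemma one_le_degG {e : V × V} (he : e ∈ E) : 1 ≤ degG E :=
  (card_pos.2 ⟨e, show e ∈ incidentEdges E e.1 from mem_filter.2 ⟨he, Or.inl rfl⟩⟩).trans_le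
    (card_incidentEdges_le_degG E e.1)

lemma sum_sum_incidentEdges_le {g : V × V → ℝ} (hg : ∀ f, 0 ≤ g f) :
    ∑ i, ∑ f ∈ incidentEdges E i, g f ≤ 2 * ∑ f ∈ E, g f := by
  have hsplit : ∀ i, ∑ f ∈ incidentEdges E i, g f
      ≤ ∑ f ∈ E with f.1 = i, g f + ∑ f ∈ E with f.2 = i, g f := fun i => by
    rw [incidentEdges, filter_or, ← sum_union_inter]
    exact le_add_of_nonneg_right (sum_nonneg fun f _ => hg f)
  calc _ ≤ ∑ i, (∑ f ∈ E with f.1 = i, g f + ∑ f ∈ E with f.2 = i, g f) :=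
        sum_le_sum fun i _ => hsplit i
    _ = 2 * ∑ f ∈ E, g f := by
        rw [sum_add_distrib, sum_fiberwise E Prod.fst g, sum_fiberwise E Prod.snd g]; ring

lemma sum_endpoint_le_degG_mul (π : V × V → V) (hπ : ∀ e, π e = e.1 ∨ π e = e.2)
    {h : V → ℝ} (hh : ∀ i, 0 ≤ h i) : ∑ e ∈ E, h (π e) ≤ degG E * ∑ i, h i := by
  rw [← sum_fiberwise' E π h, mul_sum]
  refine sum_le_sum fun i _ => ?_
  rw [sum_const, nsmul_eq_mul]
  have hsub : {e ∈ E | π e = i} ⊆ incidentEdges E i := fun e he => by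
    obtain ⟨heE, rfl⟩ := mem_filter.1 he
    exact mem_filter.2 ⟨heE, (hπ e).imp Eq.symm Eq.symm⟩
  have hcard : ((#{e ∈ E | π e = i} : ℕ) : ℝ) ≤ degG E := by
    exact_mod_cast (card_le_card hsub).trans (card_incidentEdges_le_degG E i)
  exact mul_le_mul_of_nonneg_right hcard (hh i)

end Incidence

def edgeSlackL1 {V : Type} {d : ℕ} (ν : Slk V d) (f : V × V) : ℝ :=
  ∑ x, |ν.1 f x| + ∑ x, |ν.2 f x|

lemma edgeSlackL1_nonneg {V : Type} {d : ℕ} (ν : Slk V d) (f : V × V) :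
    0 ≤ edgeSlackL1 ν f := by
  unfold edgeSlackL1; positivity

lemma slkL1_eq_sum_edgeSlackL1 {V : Type} {d : ℕ} (E : Finset (V × V)) (ν : Slk V d) :
    slkL1 E ν = ∑ f ∈ E, edgeSlackL1 ν f := rfl

lemma slkL1_le_degG_mul {V : Type} [Fintype V] [DecidableEq V] {d : ℕ} (E : Finset (V × V))
    (ν : Slk V d) : slkL1 E ν ≤ degG E * slkL1 E ν := by
  rw [slkL1_eq_sum_edgeSlackL1, mul_sum]
  exact sum_le_sum fun f hf => le_mul_of_one_le_left (edgeSlackL1_nonneg ν f)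
    (by exact_mod_cast one_le_degG E hf)

section Construction

variable {V : Type} [DecidableEq V] {d : ℕ} (E : Finset (V × V)) (ν : Slk V d)
  (τ : ℝ) (Γ : MV V d)

def slackMass (i : V) : ℝ := (∑ f ∈ incidentEdges E i, edgeSlackL1 ν f) / 2

/-- The cap `1 / (4d)` keeps the weight below `3/8`; since `|ν_{ij}(x)|` is at most both
`slackMass i` and `1 / (4d)`, `mixWeight i / d` still dominates it. -/
def mixWeight (i : V) : ℝ := d * min (slackMass E ν i) (1 / (4 * d)) + d ^ 2 * τ

def edgeMixWeight (e : V × V) : ℝ := mixWeight E ν τ e.1 + mixWeight E ν τ e.2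

def rowMarginal (e : V × V) (x : Fin d) : ℝ :=
  mixWeight E ν τ e.2 * Γ.1 e.1 x + mixWeight E ν τ e.1 / d + ν.1 e x

def colMarginal (e : V × V) (y : Fin d) : ℝ :=
  mixWeight E ν τ e.1 * Γ.1 e.2 y + mixWeight E ν τ e.2 / d + ν.2 e y

/-- The rank-one term `p qᵀ / ε` has row and column sums `p` and `q`, which are exactly what the
moved vertex marginals plus the slack require. -/
def smoothing : MV V d :=
  (fun i x => (1 - mixWeight E ν τ i) * Γ.1 i x + mixWeight E ν τ i / d,
   fun e x y => (1 - edgeMixWeight E ν τ e) * Γ.2 e x y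
      + rowMarginal E ν τ Γ e x * colMarginal E ν τ Γ e y / edgeMixWeight E ν τ e)

lemma slackMass_nonneg (i : V) : 0 ≤ slackMass E ν i :=
  div_nonneg (sum_nonneg fun f _ => edgeSlackL1_nonneg ν f) zero_le_two

lemma abs_slack_fst_le_slackMass (hν : isSlack E ν) {e : V × V} (he : e ∈ E) (x : Fin d) :
    |ν.1 e x| ≤ slackMass E ν e.1 :=
  calc |ν.1 e x| ≤ (∑ y, |ν.1 e y|) / 2 := abs_le_half_sum_abs_of_sum_eq_zero (hν e he).1 x
    _ ≤ edgeSlackL1 ν e / 2 := by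
        have := sum_nonneg fun y (_ : y ∈ univ) => abs_nonneg (ν.2 e y)
        unfold edgeSlackL1; linarith
    _ ≤ slackMass E ν e.1 := by
        unfold slackMass
        gcongr
        exact single_le_sum (fun f _ => edgeSlackL1_nonneg ν f) (mem_filter.2 ⟨he, Or.inl rfl⟩)

lemma abs_slack_snd_le_slackMass (hν : isSlack E ν) {e : V × V} (he : e ∈ E) (y : Fin d) :
    |ν.2 e y| ≤ slackMass E ν e.2 :=
  calc |ν.2 e y| ≤ (∑ x, |ν.2 e x|) / 2 := abs_le_half_sum_abs_of_sum_eq_zero (hν e he).2 y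
    _ ≤ edgeSlackL1 ν e / 2 := by
        have := sum_nonneg fun x (_ : x ∈ univ) => abs_nonneg (ν.1 e x)
        unfold edgeSlackL1; linarith
    _ ≤ slackMass E ν e.2 := by
        unfold slackMass
        gcongr
        exact single_le_sum (fun f _ => edgeSlackL1_nonneg ν f) (mem_filter.2 ⟨he, Or.inr rfl⟩)

variable {τ}

lemma mixWeight_pos (hd : 0 < d) (hτ0 : 0 < τ) (i : V) : 0 < mixWeight E ν τ i := by
  have := slackMass_nonneg E ν i
  unfold mixWeight; positivity

lemma mixWeight_le (hd : 0 < d) (hτ : (d : ℝ) ^ 2 * τ ≤ 1 / 8) (i : V) :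
    mixWeight E ν τ i ≤ 3 / 8 := by
  have hd' : (0 : ℝ) < d := by exact_mod_cast hd
  have : (d : ℝ) * min (slackMass E ν i) (1 / (4 * d)) ≤ d * (1 / (4 * d)) :=
    mul_le_mul_of_nonneg_left (min_le_right _ _) hd'.le
  rw [mul_one_div, div_mul_cancel_right₀ hd'.ne'] at this
  unfold mixWeight; linarith

lemma mixWeight_le_slackMass (i : V) : mixWeight E ν τ i ≤ d * slackMass E ν i + d ^ 2 * τ := by
  unfold mixWeight; gcongr; exact min_le_left _ _

lemma edgeMixWeight_pos (hd : 0 < d) (hτ0 : 0 < τ) (e : V × V) : 0 < edgeMixWeight E ν τ e :=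
  add_pos (mixWeight_pos E ν hd hτ0 e.1) (mixWeight_pos E ν hd hτ0 e.2)

lemma edgeMixWeight_le (hd : 0 < d) (hτ : (d : ℝ) ^ 2 * τ ≤ 1 / 8) (e : V × V) :
    edgeMixWeight E ν τ e ≤ 3 / 4 := by
  have := mixWeight_le E ν hd hτ e.1
  have := mixWeight_le E ν hd hτ e.2
  unfold edgeMixWeight; linarith

lemma mixWeight_div_eq (hd : 0 < d) (i : V) :
    mixWeight E ν τ i / d = min (slackMass E ν i) (1 / (4 * d)) + d * τ := by
  have hd' : (d : ℝ) ≠ 0 := by positivity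
  unfold mixWeight; field_simp

lemma rowMarginal_nonneg (hd : 0 < d) (hτ0 : 0 < τ) (hν : isSlack E ν)
    (hinf : ∀ e ∈ E, ∀ x : Fin d, |ν.1 e x| ≤ 1 / (4 * d) ∧ |ν.2 e x| ≤ 1 / (4 * d))
    (hΓ0 : ∀ i x, 0 ≤ Γ.1 i x) {e : V × V} (he : e ∈ E) (x : Fin d) :
    0 ≤ rowMarginal E ν τ Γ e x := by
  have hmin : |ν.1 e x| ≤ min (slackMass E ν e.1) (1 / (4 * d)) :=
    le_min (abs_slack_fst_le_slackMass E ν hν he x) (hinf e he x).1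
  have := neg_abs_le (ν.1 e x)
  have := mul_nonneg (mixWeight_pos E ν hd hτ0 e.2).le (hΓ0 e.1 x)
  have : (0 : ℝ) ≤ d * τ := by positivity
  rw [rowMarginal, mixWeight_div_eq E ν hd]
  linarith

lemma colMarginal_nonneg (hd : 0 < d) (hτ0 : 0 < τ) (hν : isSlack E ν)
    (hinf : ∀ e ∈ E, ∀ x : Fin d, |ν.1 e x| ≤ 1 / (4 * d) ∧ |ν.2 e x| ≤ 1 / (4 * d))
    (hΓ0 : ∀ i x, 0 ≤ Γ.1 i x) {e : V × V} (he : e ∈ E) (y : Fin d) :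
    0 ≤ colMarginal E ν τ Γ e y := by
  have hmin : |ν.2 e y| ≤ min (slackMass E ν e.2) (1 / (4 * d)) :=
    le_min (abs_slack_snd_le_slackMass E ν hν he y) (hinf e he y).2
  have := neg_abs_le (ν.2 e y)
  have := mul_nonneg (mixWeight_pos E ν hd hτ0 e.1).le (hΓ0 e.2 y)
  have : (0 : ℝ) ≤ d * τ := by positivity
  rw [colMarginal, mixWeight_div_eq E ν hd]
  linarith

lemma sum_rowMarginal (hd : 0 < d) (hΓ1 : ∀ i, ∑ x, Γ.1 i x = 1) {e : V × V}
    (hν1 : ∑ x, ν.1 e x = 0) : ∑ x, rowMarginal E ν τ Γ e x = edgeMixWeight E ν τ e := by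
  have hd' : (d : ℝ) ≠ 0 := by positivity
  simp only [rowMarginal, sum_add_distrib, ← mul_sum, hΓ1, hν1, sum_const, card_univ,
    Fintype.card_fin, nsmul_eq_mul]
  rw [edgeMixWeight]; field_simp; ring

lemma sum_colMarginal (hd : 0 < d) (hΓ1 : ∀ i, ∑ x, Γ.1 i x = 1) {e : V × V}
    (hν2 : ∑ y, ν.2 e y = 0) : ∑ y, colMarginal E ν τ Γ e y = edgeMixWeight E ν τ e := by
  have hd' : (d : ℝ) ≠ 0 := by positivity
  simp only [colMarginal, sum_add_distrib, ← mul_sum, hΓ1, hν2, sum_const, card_univ,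
    Fintype.card_fin, nsmul_eq_mul]
  rw [edgeMixWeight]; field_simp; ring

lemma sum_abs_sub_smoothing_fst_le (hd : 0 < d) (hτ0 : 0 < τ) (hΓ0 : ∀ i x, 0 ≤ Γ.1 i x)
    (hΓ1 : ∀ i, ∑ x, Γ.1 i x = 1) (i : V) :
    ∑ x, |(Γ - smoothing E ν τ Γ).1 i x| ≤ 2 * mixWeight E ν τ i := by
  have hd' : (d : ℝ) ≠ 0 := by positivity
  have hδ := (mixWeight_pos E ν hd hτ0 i).le
  have heq : ∀ x, (Γ - smoothing E ν τ Γ).1 i x = mixWeight E ν τ i * (Γ.1 i x - 1 / d) := by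
    intro x; simp only [smoothing, Prod.fst_sub, Pi.sub_apply]; ring
  calc ∑ x, |(Γ - smoothing E ν τ Γ).1 i x|
      = mixWeight E ν τ i * ∑ x, |Γ.1 i x - 1 / d| := by
        simp only [heq, abs_mul, abs_of_nonneg hδ, mul_sum]
    _ ≤ mixWeight E ν τ i * (∑ x, Γ.1 i x + ∑ _x : Fin d, 1 / (d : ℝ)) := by
        gcongr
        exact sum_abs_sub_le_sum_add_sum _ (fun x _ => hΓ0 i x) (fun _ _ => by positivity)
    _ = 2 * mixWeight E ν τ i := by
        rw [hΓ1, sum_const, card_univ, Fintype.card_fin, nsmul_eq_mul, mul_one_div_cancel hd']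
        ring

end Construction

section Smoothing

variable {V : Type} [Fintype V] [DecidableEq V] {d : ℕ} (E : Finset (V × V)) (ν : Slk V d)
  {τ : ℝ} {Γ : MV V d}

lemma memSL2_smoothing (hd : 0 < d) (hτ0 : 0 < τ) (hτ : (d : ℝ) ^ 2 * τ ≤ 1 / 8)
    (hν : isSlack E ν)
    (hinf : ∀ e ∈ E, ∀ x : Fin d, |ν.1 e x| ≤ 1 / (4 * d) ∧ |ν.2 e x| ≤ 1 / (4 * d))
    (hΓ : memSL2 E 0 Γ) : memSL2 E ν (smoothing E ν τ Γ) := by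
  obtain ⟨hΓ0, hΓ1, hΓ2, hrow, hcol, htot⟩ := hΓ
  have hd' : (d : ℝ) ≠ 0 := by positivity
  have hδ := fun i => (mixWeight_pos E ν hd hτ0 i).le
  have hδ1 := mixWeight_le E ν hd hτ
  have hε := edgeMixWeight_pos E ν hd hτ0
  have hε1 := edgeMixWeight_le E ν hd hτ
  have hp := fun e he x => rowMarginal_nonneg E ν Γ hd hτ0 hν hinf hΓ0 (e := e) he x
  have hq := fun e he y => colMarginal_nonneg E ν Γ hd hτ0 hν hinf hΓ0 (e := e) he y
  have hsp := fun e he => sum_rowMarginal E ν Γ (τ := τ) hd hΓ1 (hν e he).1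
  have hsq := fun e he => sum_colMarginal E ν Γ (τ := τ) hd hΓ1 (hν e he).2
  refine ⟨fun i x => ?_, fun i => ?_, fun e he x y => ?_, fun e he x => ?_, fun e he y => ?_,
    fun e he => ?_⟩ <;> simp only [smoothing]
  · have := hδ1 i; have := hδ i; have := hΓ0 i x
    have : 0 ≤ 1 - mixWeight E ν τ i := by linarith
    positivity
  · simp only [sum_add_distrib, ← mul_sum, hΓ1, sum_const, card_univ, Fintype.card_fin,
      nsmul_eq_mul]
    field_simp; ring
  · have := hε1 e; have := hε e; have := hΓ2 e he x y; have := hp e he x; have := hq e he y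
    have : 0 ≤ 1 - edgeMixWeight E ν τ e := by linarith
    positivity
  · rw [sum_add_distrib, ← mul_sum, hrow e he, ← sum_div, ← mul_sum, hsq e he,
      mul_div_cancel_right₀ _ (hε e).ne']
    simp only [Prod.fst_zero, Pi.zero_apply, add_zero, rowMarginal, edgeMixWeight]; ring
  · rw [sum_add_distrib, ← mul_sum, hcol e he, ← sum_div, ← sum_mul, hsp e he,
      mul_div_cancel_left₀ _ (hε e).ne']
    simp only [Prod.snd_zero, Pi.zero_apply, add_zero, colMarginal, edgeMixWeight]; ring
  · simp only [sum_add_distrib, ← mul_sum, ← sum_div, ← sum_mul]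
    rw [htot e he, hsp e he, hsq e he, mul_div_cancel_right₀ _ (hε e).ne']
    ring

lemma sum_abs_sub_smoothing_snd_le (hd : 0 < d) (hτ0 : 0 < τ) (hν : isSlack E ν)
    (hinf : ∀ e ∈ E, ∀ x : Fin d, |ν.1 e x| ≤ 1 / (4 * d) ∧ |ν.2 e x| ≤ 1 / (4 * d))
    (hΓ : memSL2 E 0 Γ) {e : V × V} (he : e ∈ E) :
    ∑ x, ∑ y, |(Γ - smoothing E ν τ Γ).2 e x y| ≤ 2 * edgeMixWeight E ν τ e := by
  obtain ⟨hΓ0, hΓ1, hΓ2, -, -, htot⟩ := hΓ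
  set ε := edgeMixWeight E ν τ e
  set p := rowMarginal E ν τ Γ e
  set q := colMarginal E ν τ Γ e
  have hε : 0 < ε := edgeMixWeight_pos E ν hd hτ0 e
  have hp := rowMarginal_nonneg E ν Γ hd hτ0 hν hinf hΓ0 he
  have hq := colMarginal_nonneg E ν Γ hd hτ0 hν hinf hΓ0 he
  have heq : ∀ x y, (Γ - smoothing E ν τ Γ).2 e x y = ε * Γ.2 e x y - p x * q y / ε := by
    intro x y; simp only [smoothing, Prod.snd_sub, Pi.sub_apply]; ring
  calc ∑ x, ∑ y, |(Γ - smoothing E ν τ Γ).2 e x y|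
      ≤ ∑ x, (∑ y, ε * Γ.2 e x y + ∑ y, p x * q y / ε) := by
        simp only [heq]
        gcongr with x
        exact sum_abs_sub_le_sum_add_sum _ (fun y _ => by have := hΓ2 e he x y; positivity)
          (fun y _ => by have := hp x; have := hq y; positivity)
    _ = ε * ∑ x, ∑ y, Γ.2 e x y + (∑ x, p x) * (∑ y, q y) / ε := by
        simp only [sum_add_distrib, ← mul_sum, ← sum_div, ← sum_mul]
    _ = 2 * ε := by
        rw [htot e he, sum_rowMarginal E ν Γ hd hΓ1 (hν e he).1,
          sum_colMarginal E ν Γ hd hΓ1 (hν e he).2, mul_div_cancel_right₀ _ hε.ne']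
        ring

lemma mvL1_sub_smoothing_le (hd : 0 < d) (hτ0 : 0 < τ) (hν : isSlack E ν)
    (hinf : ∀ e ∈ E, ∀ x : Fin d, |ν.1 e x| ≤ 1 / (4 * d) ∧ |ν.2 e x| ≤ 1 / (4 * d))
    (hΓ : memSL2 E 0 Γ) :
    mvL1 E (Γ - smoothing E ν τ Γ)
      ≤ 2 * (∑ i, mixWeight E ν τ i + ∑ e ∈ E, edgeMixWeight E ν τ e) := by
  rw [mul_add, mul_sum, mul_sum]
  exact add_le_add
    (sum_le_sum fun i _ => sum_abs_sub_smoothing_fst_le E ν Γ hd hτ0 hΓ.1 hΓ.2.1 i)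
    (sum_le_sum fun e he => sum_abs_sub_smoothing_snd_le E ν hd hτ0 hν hinf hΓ he)

end Smoothing

section Bounds

variable {V : Type} [Fintype V] [DecidableEq V] {d : ℕ} (E : Finset (V × V)) (ν : Slk V d)
  {τ : ℝ}

lemma sum_slackMass_le : ∑ i, slackMass E ν i ≤ slkL1 E ν := by
  simp only [slackMass, ← sum_div, slkL1_eq_sum_edgeSlackL1]
  rw [div_le_iff₀ two_pos, mul_comm]
  exact sum_sum_incidentEdges_le E (edgeSlackL1_nonneg ν)

lemma sum_mixWeight_le :
    ∑ i, mixWeight E ν τ i ≤ d * slkL1 E ν + Fintype.card V * (d ^ 2 * τ) := by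
  have hd' : (0 : ℝ) ≤ d := by positivity
  calc ∑ i, mixWeight E ν τ i ≤ ∑ i, (d * slackMass E ν i + d ^ 2 * τ) :=
        sum_le_sum fun i _ => mixWeight_le_slackMass E ν i
    _ = d * ∑ i, slackMass E ν i + Fintype.card V * (d ^ 2 * τ) := by
        rw [sum_add_distrib, mul_sum, sum_const, card_univ, nsmul_eq_mul]
    _ ≤ _ := by gcongr; exact sum_slackMass_le E ν

lemma sum_edgeMixWeight_le :
    ∑ e ∈ E, edgeMixWeight E ν τ e
      ≤ 2 * d * degG E * slkL1 E ν + 2 * E.card * (d ^ 2 * τ) := by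
  have hd' : (0 : ℝ) ≤ d := by positivity
  have hends : ∀ π : V × V → V, (∀ e, π e = e.1 ∨ π e = e.2) →
      ∑ e ∈ E, slackMass E ν (π e) ≤ degG E * slkL1 E ν := fun π hπ =>
    (sum_endpoint_le_degG_mul E π hπ (slackMass_nonneg E ν)).trans
      (by gcongr; exact sum_slackMass_le E ν)
  calc ∑ e ∈ E, edgeMixWeight E ν τ e
      ≤ ∑ e ∈ E, ((d * slackMass E ν e.1 + d ^ 2 * τ) + (d * slackMass E ν e.2 + d ^ 2 * τ)) :=
        sum_le_sum fun e _ =>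
          add_le_add (mixWeight_le_slackMass E ν e.1) (mixWeight_le_slackMass E ν e.2)
    _ = d * (∑ e ∈ E, slackMass E ν e.1 + ∑ e ∈ E, slackMass E ν e.2)
          + 2 * E.card * (d ^ 2 * τ) := by
        simp only [sum_add_distrib, ← mul_sum, sum_const, nsmul_eq_mul]; ring
    _ ≤ d * (degG E * slkL1 E ν + degG E * slkL1 E ν) + 2 * E.card * (d ^ 2 * τ) := by
        gcongr
        · exact hends Prod.fst fun e => Or.inl rfl
        · exact hends Prod.snd fun e => Or.inr rfl
    _ = _ := by ring

end Bounds

section Uniform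

variable {V : Type} {d : ℕ}

def slackUniform (ν : Slk V d) : MV V d :=
  (fun _ _ => 1 / d, fun e x y => 1 / d ^ 2 + ν.1 e x / d + ν.2 e y / d)

lemma one_div_two_mul_sq_le_slackUniform_snd {E : Finset (V × V)} {ν : Slk V d} (hd : 0 < d)
    (hinf : ∀ e ∈ E, ∀ x : Fin d, |ν.1 e x| ≤ 1 / (4 * d) ∧ |ν.2 e x| ≤ 1 / (4 * d))
    {e : V × V} (he : e ∈ E) (x y : Fin d) :
    1 / (2 * d ^ 2) ≤ (slackUniform ν).2 e x y := by
  have hd' : (0 : ℝ) < d := by exact_mod_cast hd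
  have h1 := (abs_le.1 (hinf e he x).1).1
  have h2 := (abs_le.1 (hinf e he y).2).1
  have hhalf : 1 / (2 * (d : ℝ)) = 1 / (4 * d) + 1 / (4 * d) := by field_simp; norm_num
  have hgap : (slackUniform ν).2 e x y - 1 / (2 * d ^ 2)
      = (1 / (2 * d) + ν.1 e x + ν.2 e y) / d := by
    simp only [slackUniform]; field_simp; ring
  have : 0 ≤ (1 / (2 * d) + ν.1 e x + ν.2 e y) / d := div_nonneg (by linarith) hd'.le
  linarith

lemma memSL2_slackUniform [Fintype V] {E : Finset (V × V)} {ν : Slk V d} (hd : 0 < d)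
    (hν : isSlack E ν)
    (hinf : ∀ e ∈ E, ∀ x : Fin d, |ν.1 e x| ≤ 1 / (4 * d) ∧ |ν.2 e x| ≤ 1 / (4 * d)) :
    memSL2 E ν (slackUniform ν) := by
  have hd' : (d : ℝ) ≠ 0 := by positivity
  refine ⟨fun i x => by simp only [slackUniform]; positivity, fun i => ?_,
    fun e he x y => (one_div_two_mul_sq_le_slackUniform_snd hd hinf he x y).trans' (by positivity),
    fun e he x => ?_, fun e he y => ?_, fun e he => ?_⟩
  · simp [slackUniform, hd']
  · simp only [slackUniform, sum_add_distrib, ← sum_div, (hν e he).2, sum_const, card_univ,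
      Fintype.card_fin, nsmul_eq_mul]
    field_simp; ring
  · simp only [slackUniform, sum_add_distrib, ← sum_div, (hν e he).1, sum_const, card_univ,
      Fintype.card_fin, nsmul_eq_mul]
    field_simp; ring
  · simp only [slackUniform, sum_add_distrib, ← sum_div, ← mul_sum, (hν e he).1, (hν e he).2,
      sum_const, card_univ, Fintype.card_fin, nsmul_eq_mul]
    field_simp; ring

end Uniform

section Final

variable {V : Type} [Fintype V] [DecidableEq V] {d : ℕ} (E : Finset (V × V)) (ν : Slk V d)
  (τ : ℝ) (Γ : MV V d)

/-- `2 d² τ` is the least weight on `slackUniform` that lifts every edge entry to `τ`. -/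
def smoothedMarginal : MV V d :=
  (1 - 2 * d ^ 2 * τ) • smoothing E ν τ Γ + (2 * d ^ 2 * τ) • slackUniform ν

variable {E ν τ Γ}

lemma memSL2_smoothedMarginal (hd : 0 < d) (hτ0 : 0 < τ) (hτ : (d : ℝ) ^ 2 * τ ≤ 1 / 8)
    (hν : isSlack E ν)
    (hinf : ∀ e ∈ E, ∀ x : Fin d, |ν.1 e x| ≤ 1 / (4 * d) ∧ |ν.2 e x| ≤ 1 / (4 * d))
    (hΓ : memSL2 E 0 Γ) : memSL2 E ν (smoothedMarginal E ν τ Γ) :=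
  memSL2_convexComb (memSL2_smoothing E ν hd hτ0 hτ hν hinf hΓ)
    (memSL2_slackUniform hd hν hinf) (by positivity) (by linarith)

lemma le_smoothedMarginal_fst (hd : 0 < d) (hτ0 : 0 < τ) (hτ : (d : ℝ) ^ 2 * τ ≤ 1 / 8)
    (hν : isSlack E ν)
    (hinf : ∀ e ∈ E, ∀ x : Fin d, |ν.1 e x| ≤ 1 / (4 * d) ∧ |ν.2 e x| ≤ 1 / (4 * d))
    (hΓ : memSL2 E 0 Γ) (i : V) (x : Fin d) : τ ≤ (smoothedMarginal E ν τ Γ).1 i x := by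
  have hd' : (1 : ℝ) ≤ d := by exact_mod_cast hd
  have hS := (memSL2_smoothing E ν hd hτ0 hτ hν hinf hΓ).1 i x
  have hθ : 2 * (d : ℝ) ^ 2 * τ * (1 / d) = 2 * d * τ := by field_simp
  have : 0 ≤ (1 - 2 * (d : ℝ) ^ 2 * τ) * (smoothing E ν τ Γ).1 i x :=
    mul_nonneg (by linarith) hS
  simp only [smoothedMarginal, Prod.fst_add, Prod.smul_fst, Pi.add_apply, Pi.smul_apply,
    smul_eq_mul, slackUniform, hθ]
  nlinarith

lemma le_smoothedMarginal_snd (hd : 0 < d) (hτ0 : 0 < τ) (hτ : (d : ℝ) ^ 2 * τ ≤ 1 / 8)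
    (hν : isSlack E ν)
    (hinf : ∀ e ∈ E, ∀ x : Fin d, |ν.1 e x| ≤ 1 / (4 * d) ∧ |ν.2 e x| ≤ 1 / (4 * d))
    (hΓ : memSL2 E 0 Γ) {e : V × V} (he : e ∈ E) (x y : Fin d) :
    τ ≤ (smoothedMarginal E ν τ Γ).2 e x y := by
  have hd' : (d : ℝ) ≠ 0 := by positivity
  have hS := (memSL2_smoothing E ν hd hτ0 hτ hν hinf hΓ).2.2.1 e he x y
  have hW := one_div_two_mul_sq_le_slackUniform_snd hd hinf he x y
  have : 0 ≤ (1 - 2 * (d : ℝ) ^ 2 * τ) * (smoothing E ν τ Γ).2 e x y :=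
    mul_nonneg (by linarith) hS
  have hθW : 2 * (d : ℝ) ^ 2 * τ * (1 / (2 * d ^ 2)) ≤ 2 * d ^ 2 * τ * (slackUniform ν).2 e x y :=
    mul_le_mul_of_nonneg_left hW (by positivity)
  have : 2 * (d : ℝ) ^ 2 * τ * (1 / (2 * d ^ 2)) = τ := by field_simp
  simp only [smoothedMarginal, Prod.snd_add, Prod.smul_snd, Pi.add_apply, Pi.smul_apply,
    smul_eq_mul]
  linarith

lemma mvL1_sub_smoothedMarginal_le (hd : 0 < d) (hτ0 : 0 < τ) (hτ : (d : ℝ) ^ 2 * τ ≤ 1 / 8)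
    (hν : isSlack E ν)
    (hinf : ∀ e ∈ E, ∀ x : Fin d, |ν.1 e x| ≤ 1 / (4 * d) ∧ |ν.2 e x| ≤ 1 / (4 * d))
    (hΓ : memSL2 E 0 Γ) :
    mvL1 E (Γ - smoothedMarginal E ν τ Γ)
      ≤ 6 * d * degG E * slkL1 E ν + 8 * ((E.card : ℝ) + Fintype.card V) * d ^ 2 * τ := by
  set θ : ℝ := 2 * d ^ 2 * τ
  have hθ0 : 0 ≤ θ := by positivity
  have hθ1 : θ ≤ 1 := by linarith
  have hS := mvL1_sub_smoothing_le E ν hd hτ0 hν hinf hΓ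
  have hW := mvL1_sub_le_of_memSL2 E hΓ (memSL2_slackUniform hd hν hinf)
  have hδ := sum_mixWeight_le E ν (τ := τ)
  have hε := sum_edgeMixWeight_le E ν (τ := τ)
  have hdeg : (d : ℝ) * slkL1 E ν ≤ d * (degG E * slkL1 E ν) :=
    mul_le_mul_of_nonneg_left (slkL1_le_degG_mul E ν) (Nat.cast_nonneg d)
  calc mvL1 E (Γ - smoothedMarginal E ν τ Γ)
      ≤ (1 - θ) * mvL1 E (Γ - smoothing E ν τ Γ) + θ * mvL1 E (Γ - slackUniform ν) :=
        mvL1_sub_convexComb_le E _ _ _ hθ0 hθ1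
    _ ≤ 1 * mvL1 E (Γ - smoothing E ν τ Γ) + θ * (2 * (Fintype.card V + E.card)) := by
        gcongr
        · exact mvL1_nonneg E _
        · linarith
    _ ≤ _ := by
        have : 0 ≤ ((E.card : ℝ) + Fintype.card V) * d ^ 2 * τ := by positivity
        nlinarith

end Final

theorem stmt_15_general {V : Type} [Fintype V] [DecidableEq V] {d : ℕ} (hd : 1 ≤ d)
    (E : Finset (V × V))
    (τ : ℝ) (hτ0 : 0 < τ) (hτ : τ ≤ 1 / (8 * d ^ 2))
    (ν : Slk V d) (hν : isSlack E ν)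
    (hinf : ∀ e ∈ E, ∀ x : Fin d,
      |ν.1 e x| ≤ 1 / (4 * d) ∧ |ν.2 e x| ≤ 1 / (4 * d))
    (Γ : MV V d) (hΓ : memSL2 E (0 : Slk V d) Γ) :
    ∃ Γ' : MV V d, memSL2 E ν Γ' ∧
      (∀ i x, τ ≤ Γ'.1 i x) ∧
      (∀ e ∈ E, ∀ x y, τ ≤ Γ'.2 e x y) ∧
      mvL1 E (Γ - Γ') ≤
        6 * d * degG E * slkL1 E ν +
          8 * ((E.card : ℝ) + Fintype.card V) * d ^ 2 * τ := by
  have hτ' : (d : ℝ) ^ 2 * τ ≤ 1 / 8 := by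
    rw [le_div_iff₀ (by positivity)] at hτ
    linarith
  exact ⟨smoothedMarginal E ν τ Γ, memSL2_smoothedMarginal hd hτ0 hτ' hν hinf hΓ,
    le_smoothedMarginal_fst hd hτ0 hτ' hν hinf hΓ,
    fun e he => le_smoothedMarginal_snd hd hτ0 hτ' hν hinf hΓ he,
    mvL1_sub_smoothedMarginal_le hd hτ0 hτ' hν hinf hΓ⟩

/-- From `Γ ∈ 𝕃₂` one can find `Γ' ∈ 𝕃₂^ν` with all entries
at least `τ` and `‖Γ − Γ'‖₁ ≤ 6·d·deg(G)·‖ν‖₁ + 8(|E|+n)d²τ`. -/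
theorem stmt_15 {V : Type} [Fintype V] [DecidableEq V] {d : ℕ} (hd : 1 ≤ d)
    (E : Finset (V × V))
    (hcover : ∀ i : V, ∃ e ∈ E, e.1 = i ∨ e.2 = i)
    (τ : ℝ) (hτ0 : 0 < τ) (hτ : τ ≤ 1 / (8 * d ^ 2))
    (ν : Slk V d) (hν : isSlack E ν)
    (hinf : ∀ e ∈ E, ∀ x : Fin d,
      |ν.1 e x| ≤ 1 / (4 * d) ∧ |ν.2 e x| ≤ 1 / (4 * d))
    (Γ : MV V d) (hΓ : memSL2 E (0 : Slk V d) Γ) :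
    ∃ Γ' : MV V d, memSL2 E ν Γ' ∧
      (∀ i x, τ ≤ Γ'.1 i x) ∧
      (∀ e ∈ E, ∀ x y, τ ≤ Γ'.2 e x y) ∧
      mvL1 E (Γ - Γ') ≤
        6 * d * degG E * slkL1 E ν +
          8 * ((E.card : ℝ) + Fintype.card V) * d ^ 2 * τ :=
  stmt_15_general hd E τ hτ0 hτ ν hν hinf Γ hΓ
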